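/- For any consistent distribution with respect to p-rules σ₀ ← σ₁ : [θ₁] and σ₀ ← σ₂ : [θ₂], Pr(σ₀) ≥ θ₁·Pr(σ₁) + θ₂·Pr(σ₂) − Pr(σ₁ ∧ σ₂), by inclusion–exclusion applied to σ₀ ∧ σ₁ and σ₀ ∧ σ₂. -/
import Mathlib


/-- For any probability distribution consistent with p-rules `σ₀ ← σ₁ : [θ₁]`
and `σ₀ ← σ₂ : [θ₂]`, inclusion–exclusion yields
`Pr(σ₀) ≥ θ₁·Pr(σ₁) + θ₂·Pr(σ₂) − Pr(σ₁ ∧ σ₂)`. -/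
theorem pr_ge_inclusion_exclusion (n : ℕ) (π : (Fin n → Bool) → ℝ)
    (hpos : ∀ ω, 0 ≤ π ω) (hsum : ∑ ω, π ω = 1)
    (i₀ i₁ i₂ : Fin n) (θ₁ θ₂ : ℝ)
    (h₁ : (∑ ω ∈ Finset.univ.filter (fun ω => ω i₁ = true), π ω) * θ₁ =
      ∑ ω ∈ Finset.univ.filter (fun ω => ω i₀ = true ∧ ω i₁ = true), π ω)
    (h₂ : (∑ ω ∈ Finset.univ.filter (fun ω => ω i₂ = true), π ω) * θ₂ =
      ∑ ω ∈ Finset.univ.filter (fun ω => ω i₀ = true ∧ ω i₂ = true), π ω) :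
    θ₁ * (∑ ω ∈ Finset.univ.filter (fun ω => ω i₁ = true), π ω) +
      θ₂ * (∑ ω ∈ Finset.univ.filter (fun ω => ω i₂ = true), π ω) -
      (∑ ω ∈ Finset.univ.filter (fun ω => ω i₁ = true ∧ ω i₂ = true), π ω) ≤
    ∑ ω ∈ Finset.univ.filter (fun ω => ω i₀ = true), π ω := by

  rw [mul_comm θ₁, mul_comm θ₂, h₁, h₂]
  set A := Finset.univ.filter (fun ω : Fin n → Bool => ω i₀ = true ∧ ω i₁ = true) with hA
  set B := Finset.univ.filter (fun ω : Fin n → Bool => ω i₀ = true ∧ ω i₂ = true) with hB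
  have key : ∑ ω ∈ A, π ω + ∑ ω ∈ B, π ω
      = ∑ ω ∈ A ∪ B, π ω + ∑ ω ∈ A ∩ B, π ω :=
    (Finset.sum_union_inter).symm
  rw [key]
  have hsub1 : A ∪ B ⊆ Finset.univ.filter (fun ω : Fin n → Bool => ω i₀ = true) := by
    intro ω hω
    simp only [hA, hB, Finset.mem_union, Finset.mem_filter, Finset.mem_univ, true_and] at hω ⊢
    tauto
  have hsub2 : A ∩ B ⊆ Finset.univ.filter (fun ω : Fin n → Bool => ω i₁ = true ∧ ω i₂ = true) := by
    intro ω hω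
    simp only [hA, hB, Finset.mem_inter, Finset.mem_filter, Finset.mem_univ, true_and] at hω ⊢
    tauto
  have := Finset.sum_le_sum_of_subset_of_nonneg hsub1 (fun ω _ _ => hpos ω)
  have := Finset.sum_le_sum_of_subset_of_nonneg hsub2 (fun ω _ _ => hpos ω)
  linarith
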